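/- arXiv:1912.03023 — 2 statements merged into one kernel-verified Lean document; each statement's English description precedes it below -/
import Mathlib

section
/- If a species has global abundance n distributed according to a zero-truncated negative binomial with parameters r and ξ, i.e. P(n|1) = c(r,ξ)·C(n+r-1, n)·ξ^n·(1-ξ)^r for n ≥ 1, and individuals are sampled independently with probability p, then the sampled abundance k ≥ 1 has probability P(k|p) = c(r,ξ)·C(k+r-1, k)·ξ_p^k·(1-ξ_p)^r, where ξ_p = pξ/(1-ξ(1-p)). -/
/-!
Writing `n = k + m`, the product `C(k+m, k) · C(k+m+r-1, k+m)` factors as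
`C(k+r-1, k) · C(m+(r+k)-1, m)`, so the sum over `m` is the negative binomial series
`∑ C(m+s-1, m) xᵐ = (1 - x)^(-s)` with `s = r + k` and `x = ξ(1-p)`. The resulting closed form is
the claimed one because `1 - ξ_p = (1 - ξ) / (1 - ξ(1-p))`.
-/

/-- Generalized negative binomial coefficient C(n+r-1, n) = Γ(n+r)/(Γ(n+1)Γ(r)). -/
noncomputable def nbCoef (r : ℝ) (n : ℕ) : ℝ :=
  Real.Gamma (n + r) / (Real.Gamma (n + 1) * Real.Gamma r)

open Polynomial

theorem Real.Gamma_natCast_add_eq_ascPochhammer_mul {a : ℝ} (ha : ∀ k : ℕ, a ≠ -k) (n : ℕ) :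
    Gamma (n + a) = (ascPochhammer ℝ n).eval a * Gamma a := by
  induction n with
  | zero => simp
  | succ n ih =>
    have hna : (n : ℝ) + a ≠ 0 := fun h => ha n (by linarith)
    rw [Nat.cast_succ, add_right_comm, Gamma_add_one hna, ih, ascPochhammer_succ_eval]
    ring

theorem nbCoef_eq_choose {r : ℝ} (hr : ∀ k : ℕ, r ≠ -k) (n : ℕ) :
    nbCoef r n = Ring.choose (r + n - 1) n := by
  have hfac : (n.factorial : ℝ) ≠ 0 := Nat.cast_ne_zero.mpr n.factorial_ne_zero
  rw [← Ring.multichoose_eq, eq_comm, ← mul_right_inj' hfac, ← nsmul_eq_mul,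
    Ring.factorial_nsmul_multichoose_eq_ascPochhammer, ascPochhammer_smeval_eq_eval, nbCoef,
    Real.Gamma_natCast_add_eq_ascPochhammer_mul hr, Real.Gamma_nat_eq_factorial]
  field_simp [Real.Gamma_ne_zero hr]

theorem hasSum_nbCoef_mul_pow {r x : ℝ} (hr : ∀ k : ℕ, r ≠ -k) (hx : |x| < 1) :
    HasSum (fun n => nbCoef r n * x ^ n) ((1 - x) ^ (-r)) := by
  have hx_mem : x ∈ Metric.eball (0 : ℝ) 1 := by
    simpa [enorm_eq_nnnorm, ← NNReal.coe_lt_coe] using hx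
  have hseries := (Real.one_div_one_sub_rpow_hasFPowerSeriesOnBall_zero r).hasSum hx_mem
  simp only [FormalMultilinearSeries.ofScalars_apply_eq, smul_eq_mul, zero_add] at hseries
  rw [Real.rpow_neg (by linarith [le_abs_self x]), ← one_div]
  simpa [nbCoef_eq_choose hr, add_sub_right_comm] using hseries

theorem choose_mul_nbCoef_add {r : ℝ} (hr : ∀ j : ℕ, r ≠ -j) (k m : ℕ) :
    ((k + m).choose k : ℝ) * nbCoef r (k + m) = nbCoef r k * nbCoef (r + k) m := by
  have hrk : ∀ j : ℕ, r + k ≠ -j := fun j h => hr (j + k) (by push_cast; linarith)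
  have hfac : ∀ n : ℕ, (n.factorial : ℝ) ≠ 0 := fun n => Nat.cast_ne_zero.mpr n.factorial_ne_zero
  simp only [nbCoef, Nat.cast_choose ℝ (Nat.le_add_right k m), Nat.add_sub_cancel_left,
    Real.Gamma_nat_eq_factorial]
  rw [show ((k + m : ℕ) : ℝ) + r = m + (r + k) by push_cast; ring, add_comm (k : ℝ) r]
  field_simp [Real.Gamma_ne_zero hr, Real.Gamma_ne_zero hrk, hfac]

theorem stmt0_general (r ξ p : ℝ) (hr : 0 < r) (hξ : ξ ∈ Set.Ioo (0:ℝ) 1)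
    (hp : p ∈ Set.Ioo (0:ℝ) 1) (k : ℕ) :
    ∑' m : ℕ, ((k + m).choose k : ℝ) * p ^ k * (1 - p) ^ m *
        ((1 - (1 - ξ) ^ r)⁻¹ * nbCoef r (k + m) * ξ ^ (k + m) * (1 - ξ) ^ r)
      = (1 - (1 - ξ) ^ r)⁻¹ * nbCoef r k * (p * ξ / (1 - ξ * (1 - p))) ^ k *
        (1 - p * ξ / (1 - ξ * (1 - p))) ^ r := by
  obtain ⟨hξ0, hξ1⟩ := hξ
  obtain ⟨hp0, hp1⟩ := hp
  have hr' : ∀ j : ℕ, r ≠ -j := fun j h => by linarith [(Nat.cast_nonneg j : (0 : ℝ) ≤ j)]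
  have hrk : ∀ j : ℕ, r + k ≠ -j := fun j h => by linarith [(Nat.cast_nonneg j : (0 : ℝ) ≤ j)]
  have hd : 0 < 1 - ξ * (1 - p) := by nlinarith
  have hthin : |ξ * (1 - p)| < 1 := by rw [abs_of_nonneg (by nlinarith)]; nlinarith
  calc _ = ∑' m : ℕ, (1 - (1 - ξ) ^ r)⁻¹ * (1 - ξ) ^ r * nbCoef r k * (p * ξ) ^ k *
          (nbCoef (r + k) m * (ξ * (1 - p)) ^ m) := by
        refine tsum_congr fun m => ?_
        rw [mul_pow, mul_pow]
        linear_combination (1 - (1 - ξ) ^ r)⁻¹ * (1 - ξ) ^ r * p ^ k * ξ ^ (k + m) * (1 - p) ^ m *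
          choose_mul_nbCoef_add hr' k m
    _ = (1 - (1 - ξ) ^ r)⁻¹ * (1 - ξ) ^ r * nbCoef r k * (p * ξ) ^ k *
          (1 - ξ * (1 - p)) ^ (-(r + k)) :=
        ((hasSum_nbCoef_mul_pow hrk hthin).mul_left _).tsum_eq
    _ = _ := by
        rw [show 1 - p * ξ / (1 - ξ * (1 - p)) = (1 - ξ) / (1 - ξ * (1 - p)) by field_simp; ring,
          Real.div_rpow (by linarith) hd.le, Real.rpow_neg hd.le, Real.rpow_add hd,
          Real.rpow_natCast, div_pow]
        field_simp

/-- Binomially thinning a zero-truncated negative binomial RSA at rate p gives the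
truncated negative binomial with rescaled parameter ξ_p, for every k ≥ 1. -/
theorem stmt0 (r ξ p : ℝ) (hr : 0 < r) (hξ : ξ ∈ Set.Ioo (0:ℝ) 1)
    (hp : p ∈ Set.Ioo (0:ℝ) 1) (k : ℕ) (hk : 1 ≤ k) :
    ∑' m : ℕ, ((k + m).choose k : ℝ) * p ^ k * (1 - p) ^ m *
        ((1 - (1 - ξ) ^ r)⁻¹ * nbCoef r (k + m) * ξ ^ (k + m) * (1 - ξ) ^ r)
      = (1 - (1 - ξ) ^ r)⁻¹ * nbCoef r k * (p * ξ / (1 - ξ * (1 - p))) ^ k *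
        (1 - p * ξ / (1 - ξ * (1 - p))) ^ r :=
  stmt0_general r ξ p hr hξ hp k
end

section
/- Let abundances (n_s)_{s=1..S} be i.i.d. zero-truncated negative binomial with parameters r, ξ, and let each individual be sampled independently with probability p. Define S^new_{1-p} = Σ_s 1{n_s^p = 0}, the number of species entirely missed by the sample. Then E[S^new_{1-p}] = S·(1 - c(r,ξ)/c(r,ξ_p)), where c(r,x) = 1/(1-(1-x)^r) and ξ_p = pξ/(1-ξ(1-p)). -/
/-!
Species `s` is missed by the sample with probability `E[(1 - p) ^ n_s]`, the probability
generating function of the zero-truncated negative binomial law at `1 - p`. Its weights are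
`nbCoef r n = Ring.multichoose r n`, so the binomial series `∑ multichoose r n x ^ n = (1 - x) ^ (-r)`
evaluates it as `(((1 - ξ) / (1 - (1 - p) ξ)) ^ r - (1 - ξ) ^ r) / (1 - (1 - ξ) ^ r)`, and linearity
of expectation multiplies this by `S`.

The event `{n_s^p = 0}` is handled through outer measure: the bounds
`μ {n_s^p = 0} ≤ ∑ (1 - p) ^ n P(n_s = n)` and `μ {n_s^p ≠ 0} ≤ ∑ (1 - (1 - p) ^ n) P(n_s = n)`
add up to `1`, which forces equality in both and makes the event null-measurable.
-/

open MeasureTheory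

open Set

theorem Real.Gamma_add_nat_eq_mul_ascPochhammer {r : ℝ} (hr : ∀ m : ℕ, r ≠ -m) (n : ℕ) :
    Real.Gamma (r + n) = Real.Gamma r * (ascPochhammer ℝ n).eval r := by
  induction n with
  | zero => simp
  | succ n ih =>
    have hrn : r + n ≠ 0 := fun h => hr n (by linarith)
    rw [Nat.cast_succ, ← add_assoc, Real.Gamma_add_one hrn, ih, ascPochhammer_succ_eval]
    ring

theorem nbCoef_eq_multichoose {r : ℝ} (hr : ∀ m : ℕ, r ≠ -m) (n : ℕ) :
    nbCoef r n = Ring.multichoose r n := by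
  have h := Ring.factorial_nsmul_multichoose_eq_ascPochhammer r n
  rw [Polynomial.ascPochhammer_smeval_eq_eval, nsmul_eq_mul] at h
  have : (n.factorial : ℝ) ≠ 0 := by positivity
  have := Real.Gamma_ne_zero hr
  rw [nbCoef, add_comm, Real.Gamma_add_nat_eq_mul_ascPochhammer hr, Real.Gamma_nat_eq_factorial,
    ← h]
  field_simp

theorem Real.hasSum_multichoose_mul_pow (r : ℝ) {t : ℝ} (ht : |t| < 1) :
    HasSum (fun n : ℕ => Ring.multichoose r n * t ^ n) ((1 - t) ^ (-r)) := by
  have h := (Real.one_div_one_sub_rpow_hasFPowerSeriesOnBall_zero r).hasSum (y := t)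
    (by simpa [enorm_eq_nnnorm, ← NNReal.coe_lt_coe] using ht)
  simp only [FormalMultilinearSeries.ofScalars, zero_add, one_div] at h
  rw [Real.rpow_neg (by linarith [le_abs_self t])]
  simpa [Ring.multichoose_eq] using h

theorem nbCoef_nonneg {r : ℝ} (hr : 0 < r) (n : ℕ) : 0 ≤ nbCoef r n := by
  unfold nbCoef
  have := Real.Gamma_pos_of_pos (show 0 < n + r by positivity)
  have := Real.Gamma_pos_of_pos (show (0 : ℝ) < n + 1 by positivity)
  have := Real.Gamma_pos_of_pos hr
  positivity

noncomputable def zeroTruncNegBinomialProb (r ξ : ℝ) (n : ℕ) : ℝ :=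
  if 1 ≤ n then (1 - (1 - ξ) ^ r)⁻¹ * nbCoef r n * ξ ^ n * (1 - ξ) ^ r else 0

theorem zeroTruncNegBinomialProb_nonneg {r ξ : ℝ} (hr : 0 < r) (hξ : ξ ∈ Ico 0 1) (n : ℕ) :
    0 ≤ zeroTruncNegBinomialProb r ξ n := by
  obtain ⟨hξ0, hξ1⟩ := hξ
  have hu : (1 - ξ) ^ r ≤ 1 := Real.rpow_le_one (by linarith) (by linarith) hr.le
  have := nbCoef_nonneg hr n
  unfold zeroTruncNegBinomialProb
  split_ifs
  · have : 0 ≤ 1 - (1 - ξ) ^ r := by linarith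
    positivity
  · rfl

theorem hasSum_pow_mul_zeroTruncNegBinomialProb {r ξ s : ℝ} (hr : 0 < r) (hξ : ξ ∈ Ico 0 1)
    (hs : |s| ≤ 1) :
    HasSum (fun n => s ^ n * zeroTruncNegBinomialProb r ξ n)
      ((((1 - ξ) / (1 - s * ξ)) ^ r - (1 - ξ) ^ r) / (1 - (1 - ξ) ^ r)) := by
  obtain ⟨hξ0, hξ1⟩ := hξ
  have hsξ : |s * ξ| < 1 := by
    rw [abs_mul, abs_of_nonneg hξ0]
    nlinarith [abs_nonneg s]
  -- the zero truncation drops the term `1` at `n = 0` of the binomial series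
  have hseries := (Real.hasSum_multichoose_mul_pow r hsξ).update 0 0
  simp only [Ring.multichoose_zero_right, pow_zero, mul_one, zero_sub] at hseries
  have hr' : ∀ m : ℕ, r ≠ -m := fun m h => by linarith [(Nat.cast_nonneg m : (0 : ℝ) ≤ m)]
  have h1sξ : 0 ≤ 1 - s * ξ := by linarith [le_abs_self (s * ξ)]
  have hvalue : (((1 - ξ) / (1 - s * ξ)) ^ r - (1 - ξ) ^ r) / (1 - (1 - ξ) ^ r) =
      (1 - (1 - ξ) ^ r)⁻¹ * (1 - ξ) ^ r * (-1 + (1 - s * ξ) ^ (-r)) := by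
    rw [Real.div_rpow (by linarith) h1sξ, Real.rpow_neg h1sξ]
    ring
  rw [hvalue]
  refine (hseries.mul_left _).congr_fun fun n => ?_
  rcases Nat.eq_zero_or_pos n with rfl | hn
  · simp [zeroTruncNegBinomialProb]
  · simp only [zeroTruncNegBinomialProb, Nat.one_le_iff_ne_zero.2 hn.ne', ↓reduceIte,
      nbCoef_eq_multichoose hr', Function.update, hn.ne', ↓reduceDIte, mul_pow]
    ring

theorem hasSum_zeroTruncNegBinomialProb {r ξ : ℝ} (hr : 0 < r) (hξ : ξ ∈ Ioo 0 1) :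
    HasSum (zeroTruncNegBinomialProb r ξ) 1 := by
  have hu : (1 - ξ) ^ r < 1 := Real.rpow_lt_one (by linarith [hξ.2]) (by linarith [hξ.1]) hr
  have h := hasSum_pow_mul_zeroTruncNegBinomialProb (s := 1) hr (Ioo_subset_Ico_self hξ)
    (by norm_num)
  rw [one_mul, div_self (sub_pos.2 hξ.2).ne', Real.one_rpow, div_self (sub_pos.2 hu).ne'] at h
  simpa only [one_pow, one_mul] using h

section OuterMeasure

variable {Ω : Type*} [MeasurableSpace Ω] {μ : Measure Ω} {A : Set Ω}

theorem nullMeasurableSet_of_measure_add_measure_compl_le [IsFiniteMeasure μ]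
    (h : μ A + μ Aᶜ ≤ μ univ) : NullMeasurableSet A μ := by
  set B := toMeasurable μ A
  set C := toMeasurable μ Aᶜ
  have hBC : B ∪ C = univ :=
    univ_subset_iff.1 (union_compl_self A ▸ union_subset_union (subset_toMeasurable μ A)
      (subset_toMeasurable μ Aᶜ))
  have hinter : μ (B ∩ C) = 0 := by
    have h' := measure_union_add_inter B (measurableSet_toMeasurable μ Aᶜ) (μ := μ)
    rw [hBC, measure_toMeasurable, measure_toMeasurable] at h'
    have : μ univ + μ (B ∩ C) ≤ μ univ + 0 := by rw [h', add_zero]; exact h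
    exact le_antisymm ((ENNReal.add_le_add_iff_left (measure_ne_top μ univ)).1 this) bot_le
  have hAB : A =ᵐ[μ] B := by
    refine ae_eq_set.2 ⟨by rw [sdiff_eq_empty.2 (subset_toMeasurable μ A), measure_empty], ?_⟩
    exact measure_mono_null (inter_subset_inter_right B (subset_toMeasurable μ Aᶜ)) hinter
  exact (measurableSet_toMeasurable μ A).nullMeasurableSet.congr hAB.symm

theorem measure_eq_of_le_of_measure_compl_le [IsFiniteMeasure μ] {a b : ENNReal} (ha : μ A ≤ a)
    (hb : μ Aᶜ ≤ b) (hab : a + b ≤ μ univ) : μ A = a := by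
  refine le_antisymm ha (not_lt.1 fun hlt => ?_)
  have := ENNReal.add_lt_add_of_lt_of_le (measure_ne_top μ Aᶜ) hlt hb
  exact ((measure_univ_le_add_compl A).trans_lt (this.trans_le hab)).false

end OuterMeasure

theorem sum_range_choose_succ_mul_pow {R : Type*} [CommRing R] (p : R) (n : ℕ) :
    ∑ k ∈ Finset.range n, (n.choose (k + 1) : R) * p ^ (k + 1) * (1 - p) ^ (n - (k + 1)) =
      1 - (1 - p) ^ n := by
  have h := add_pow p (1 - p) n
  rw [add_sub_cancel, one_pow, Finset.sum_range_succ'] at h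
  simp only [pow_zero, Nat.choose_zero_right, Nat.cast_one, mul_one, one_mul, Nat.sub_zero] at h
  calc _ = ∑ k ∈ Finset.range n, p ^ (k + 1) * (1 - p) ^ (n - (k + 1)) * (n.choose (k + 1) : R) :=
        Finset.sum_congr rfl fun k _ => by ring
    _ = 1 - (1 - p) ^ n := eq_sub_of_add_eq h.symm

section Thinning

variable {Ω : Type*} [MeasurableSpace Ω]

def HasThinnedJointLaw (μ : Measure Ω) (N K : Ω → ℕ) (p : ℝ) (f : ℕ → ℝ) : Prop :=
  ∀ n k : ℕ, k ≤ n → μ {ω | N ω = n ∧ K ω = k} =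
    ENNReal.ofReal ((n.choose k : ℝ) * p ^ k * (1 - p) ^ (n - k) * f n)

variable {μ : Measure Ω} {N K : Ω → ℕ} {p : ℝ} {f : ℕ → ℝ}

theorem HasThinnedJointLaw.measure_eq_zero_le (h : HasThinnedJointLaw μ N K p f) :
    μ {ω | K ω = 0} ≤ ∑' n, ENNReal.ofReal ((1 - p) ^ n * f n) := by
  calc μ {ω | K ω = 0} ≤ μ (⋃ n, {ω | N ω = n ∧ K ω = 0}) :=
        measure_mono fun ω hω => mem_iUnion.2 ⟨N ω, rfl, hω⟩
    _ ≤ ∑' n, μ {ω | N ω = n ∧ K ω = 0} := measure_iUnion_le _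
    _ = ∑' n, ENNReal.ofReal ((1 - p) ^ n * f n) :=
        tsum_congr fun n => by simp [h n 0 n.zero_le]

theorem HasThinnedJointLaw.measure_ne_zero_le (h : HasThinnedJointLaw μ N K p f)
    (hle : ∀ ω, K ω ≤ N ω) (hp : p ∈ Icc 0 1) (hf : ∀ n, 0 ≤ f n) :
    μ {ω | K ω = 0}ᶜ ≤ ∑' n, ENNReal.ofReal ((1 - (1 - p) ^ n) * f n) := by
  have hcover : ∀ n, {ω | N ω = n ∧ K ω ≠ 0} ⊆
      ⋃ k ∈ Finset.range n, {ω | N ω = n ∧ K ω = k + 1} := by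
    rintro n ω ⟨rfl, hK⟩
    exact mem_iUnion₂.2 ⟨K ω - 1, Finset.mem_range.2 (by have := hle ω; omega), rfl, by omega⟩
  have hterm : ∀ n k, 0 ≤ (n.choose (k + 1) : ℝ) * p ^ (k + 1) * (1 - p) ^ (n - (k + 1)) * f n :=
    fun n k => by
      have := hp.1
      have : 0 ≤ 1 - p := sub_nonneg.2 hp.2
      have := hf n
      positivity
  calc μ {ω | K ω = 0}ᶜ ≤ μ (⋃ n, {ω | N ω = n ∧ K ω ≠ 0}) :=
        measure_mono fun ω hω => mem_iUnion.2 ⟨N ω, rfl, hω⟩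
    _ ≤ ∑' n, μ {ω | N ω = n ∧ K ω ≠ 0} := measure_iUnion_le _
    _ ≤ ∑' n, ENNReal.ofReal ((1 - (1 - p) ^ n) * f n) := by
        refine ENNReal.tsum_le_tsum fun n => (measure_mono (hcover n)).trans ?_
        refine (measure_biUnion_finset_le _ _).trans (le_of_eq ?_)
        rw [← sum_range_choose_succ_mul_pow, Finset.sum_mul,
          ENNReal.ofReal_sum_of_nonneg fun k _ => hterm n k]
        exact Finset.sum_congr rfl fun k hk =>
          h n (k + 1) (Finset.mem_range.1 hk)

theorem tsum_ofReal_pow_mul_add_tsum_ofReal_one_sub_pow_mul (hp : p ∈ Icc 0 1)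
    (hf0 : ∀ n, 0 ≤ f n) (hf : HasSum f 1) :
    ∑' n, ENNReal.ofReal ((1 - p) ^ n * f n) + ∑' n, ENNReal.ofReal ((1 - (1 - p) ^ n) * f n) =
      1 := by
  have hq : ∀ n, (1 - p) ^ n ≤ 1 := fun n => pow_le_one₀ (by linarith [hp.2]) (by linarith [hp.1])
  have hq0 : ∀ n, 0 ≤ (1 - p) ^ n := fun n => pow_nonneg (by linarith [hp.2]) n
  calc _ = ∑' n, ENNReal.ofReal (f n) := by
        rw [← ENNReal.tsum_add]
        refine tsum_congr fun n => ?_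
        rw [← ENNReal.ofReal_add (mul_nonneg (hq0 n) (hf0 n))
          (mul_nonneg (sub_nonneg.2 (hq n)) (hf0 n))]
        ring_nf
    _ = 1 := by
        rw [← ENNReal.ofReal_tsum_of_nonneg hf0 hf.summable, hf.tsum_eq, ENNReal.ofReal_one]

variable [IsProbabilityMeasure μ]

theorem HasThinnedJointLaw.nullMeasurableSet_eq_zero (h : HasThinnedJointLaw μ N K p f)
    (hle : ∀ ω, K ω ≤ N ω) (hp : p ∈ Icc 0 1) (hf0 : ∀ n, 0 ≤ f n) (hf : HasSum f 1) :
    NullMeasurableSet {ω | K ω = 0} μ := by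
  refine nullMeasurableSet_of_measure_add_measure_compl_le ?_
  calc _ ≤ _ := add_le_add h.measure_eq_zero_le (h.measure_ne_zero_le hle hp hf0)
    _ = μ univ := by rw [tsum_ofReal_pow_mul_add_tsum_ofReal_one_sub_pow_mul hp hf0 hf, measure_univ]

theorem HasThinnedJointLaw.measure_eq_zero (h : HasThinnedJointLaw μ N K p f)
    (hle : ∀ ω, K ω ≤ N ω) (hp : p ∈ Icc 0 1) (hf0 : ∀ n, 0 ≤ f n) (hf : HasSum f 1) :
    μ {ω | K ω = 0} = ENNReal.ofReal (∑' n, (1 - p) ^ n * f n) := by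
  have hq : ∀ n, (1 - p) ^ n * f n ≤ f n := fun n =>
    mul_le_of_le_one_left (hf0 n) (pow_le_one₀ (by linarith [hp.2]) (by linarith [hp.1]))
  have hq0 : ∀ n, 0 ≤ (1 - p) ^ n * f n := fun n =>
    mul_nonneg (pow_nonneg (by linarith [hp.2]) n) (hf0 n)
  rw [measure_eq_of_le_of_measure_compl_le h.measure_eq_zero_le (h.measure_ne_zero_le hle hp hf0)
    (by rw [tsum_ofReal_pow_mul_add_tsum_ofReal_one_sub_pow_mul hp hf0 hf, measure_univ]),
    ENNReal.ofReal_tsum_of_nonneg hq0 (hf.summable.of_nonneg_of_le hq0 hq)]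

end Thinning

theorem integral_card_filter {Ω ι : Type*} [MeasurableSpace Ω] [Fintype ι] (μ : Measure Ω)
    [IsFiniteMeasure μ] (P : ι → Ω → Prop) [∀ i, DecidablePred (P i)]
    (hP : ∀ i, NullMeasurableSet {ω | P i ω} μ) :
    ∫ ω, ((Finset.univ.filter fun i => P i ω).card : ℝ) ∂μ = ∑ i, μ.real {ω | P i ω} := by
  have hcard : ∀ ω, ((Finset.univ.filter fun i => P i ω).card : ℝ) =
      ∑ i, {ω | P i ω}.indicator 1 ω := fun ω => by
    simp only [Finset.card_filter, Nat.cast_sum, Nat.cast_ite, Nat.cast_one, Nat.cast_zero,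
      Set.indicator_apply, Set.mem_ofPred_eq, Pi.one_apply]
  simp_rw [hcard]
  rw [integral_finsetSum _ fun i _ => (integrableOn_const).integrable_indicator₀ (hP i)]
  refine Finset.sum_congr rfl fun i _ => ?_
  rw [integral_indicator₀ (hP i), Pi.one_def, setIntegral_const, smul_eq_mul, mul_one]

/-- Expected number of species missed by the sample:
E[Σ_s 1{n_s^p = 0}] = S·(1 - c(r,ξ)/c(r,ξ_p)), where c(r,x) = 1/(1-(1-x)^r)
and ξ_p = pξ/(1-ξ(1-p)). -/
theorem stmt14 {Ω : Type*} [MeasurableSpace Ω] (μ : Measure Ω)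
    [IsProbabilityMeasure μ] (r ξ p : ℝ) (hr : 0 < r)
    (hξ : ξ ∈ Set.Ioo (0:ℝ) 1) (hp : p ∈ Set.Ioo (0:ℝ) 1)
    (S : ℕ) (N Np : Fin S → Ω → ℕ) (hle : ∀ s ω, Np s ω ≤ N s ω)
    (hjoint : ∀ s, ∀ n k : ℕ, k ≤ n →
      μ {ω | N s ω = n ∧ Np s ω = k} =
        ENNReal.ofReal ((n.choose k : ℝ) * p ^ k * (1 - p) ^ (n - k) *
          (if 1 ≤ n then (1 - (1 - ξ) ^ r)⁻¹ * nbCoef r n * ξ ^ n * (1 - ξ) ^ r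
           else 0))) :
    ∫ ω, ((Finset.univ.filter fun s : Fin S => Np s ω = 0).card : ℝ) ∂μ =
      S * (1 - (1 - (1 - ξ) ^ r)⁻¹ /
        (1 - (1 - p * ξ / (1 - ξ * (1 - p))) ^ r)⁻¹) := by
  have hlaw : ∀ s, HasThinnedJointLaw μ (N s) (Np s) p (zeroTruncNegBinomialProb r ξ) := hjoint
  have hp' : p ∈ Icc 0 1 := Ioo_subset_Icc_self hp
  have hf0 := zeroTruncNegBinomialProb_nonneg hr (Ioo_subset_Ico_self hξ)
  have hf := hasSum_zeroTruncNegBinomialProb hr hξ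
  have hmiss := hasSum_pow_mul_zeroTruncNegBinomialProb (s := 1 - p) hr (Ioo_subset_Ico_self hξ)
    (abs_le.2 ⟨by linarith [hp.2], by linarith [hp.1]⟩)
  rw [integral_card_filter μ (fun s ω => Np s ω = 0)
    fun s => (hlaw s).nullMeasurableSet_eq_zero (hle s) hp' hf0 hf]
  simp only [measureReal_def, fun s => (hlaw s).measure_eq_zero (hle s) hp' hf0 hf,
    hmiss.tsum_eq, Finset.sum_const, Finset.card_univ, Fintype.card_fin, nsmul_eq_mul]
  have hu : 1 - (1 - ξ) ^ r ≠ 0 :=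
    (sub_pos.2 (Real.rpow_lt_one (by linarith [hξ.2]) (by linarith [hξ.1]) hr)).ne'
  have hξp : 1 - p * ξ / (1 - ξ * (1 - p)) = (1 - ξ) / (1 - (1 - p) * ξ) := by
    have : 1 - ξ * (1 - p) ≠ 0 := by nlinarith [hξ.1, hξ.2, hp.1, hp.2]
    field_simp
    ring
  rw [ENNReal.toReal_ofReal (hmiss.nonneg fun n => mul_nonneg (pow_nonneg (by linarith [hp.2]) n)
    (hf0 n)), hξp, inv_div_inv, one_sub_div hu, sub_sub_sub_cancel_left]
end
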